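/- Lagrange's method of varying constants (exact form): let Q, R : ℝ × ℝ^{2n} → ℝ be C² and let Φ : ℝ × ℝ^{2n} → ℝ^{2n} be a C¹ map such that ∂Φ/∂t(t, a) = J ∇_z Q(t, Φ(t, a)) for all (t, a) and such that for every (t, a) the spatial Jacobian D_aΦ(t, a) is an invertible symplectic matrix. Let a : I → ℝ^{2n} be a C¹ curve on an interval I. Then t ↦ Φ(t, a(t)) is a solution of Hamilton's equations for the Hamiltonian Q + R if and only if a is a solution of Hamilton's equations for the pulled-back time-dependent Hamiltonian K(t, a) = R(t, Φ(t, a)), i.e. a'(t) = J ∇_a K(t, a(t)) for all t ∈ I. -/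

import Mathlib

open Matrix

/-- The standard `2n × 2n` real symplectic matrix `J = [[0, Iₙ], [−Iₙ, 0]]`,
with the indexing set `Fin n ⊕ Fin n` for `{1, …, 2n}`. -/
def symplecticJ (n : ℕ) : Matrix (Fin n ⊕ Fin n) (Fin n ⊕ Fin n) ℝ :=
  Matrix.fromBlocks 0 1 (-1) 0

/-- The spatial Jacobian matrix `D_aΦ(t, a)` of a time-dependent map
`Φ : ℝ → ℝ²ⁿ → ℝ²ⁿ`: its `(i, j)` entry is `∂Φ_i/∂a_j (t, a)`. -/
noncomputable def spatialJacobian (n : ℕ)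
    (Φ : ℝ → ((Fin n ⊕ Fin n) → ℝ) → (Fin n ⊕ Fin n) → ℝ)
    (t : ℝ) (a : (Fin n ⊕ Fin n) → ℝ) : Matrix (Fin n ⊕ Fin n) (Fin n ⊕ Fin n) ℝ :=
  Matrix.of fun i j => fderiv ℝ (fun b => Φ t b i) a (Pi.single j 1)

/-- A curve `z` is a solution on the interval `I` of Hamilton's equations for a
time-dependent Hamiltonian `H : ℝ × ℝ²ⁿ → ℝ` if `z'(t) = J ∇_z H(t, z(t))` for
all `t ∈ I`, written componentwise:
`z_i'(t) = ∑ j, J i j · ∂H/∂z_j (t, z(t))`. -/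
def IsHamiltonSolutionOn (n : ℕ)
    (H : ℝ × ((Fin n ⊕ Fin n) → ℝ) → ℝ)
    (z : ℝ → (Fin n ⊕ Fin n) → ℝ) (I : Set ℝ) : Prop :=
  ∀ t ∈ I, ∀ i : Fin n ⊕ Fin n,
    HasDerivWithinAt (fun s => z s i)
      (∑ j : Fin n ⊕ Fin n, symplecticJ n i j *
        fderiv ℝ (fun w => H (t, w)) (z t) (Pi.single j 1)) I t

/-! Along the curve, `d/dt Φ(t, a(t)) = ∂ₜΦ + D_aΦ · a' = J ∇Q + M a'` with `M = D_aΦ(t, a(t))`,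
so `Φ(t, a(t))` solves Hamilton's equations for `Q + R` exactly when `M a' = J ∇R(t, Φ(t, a(t)))`.
A symplectic `M` is invertible with `M J Mᵀ = J`, so this is `a' = J Mᵀ ∇R`, and `Mᵀ ∇R = ∇K` by
the chain rule. At isolated points of `I` both derivative conditions hold vacuously; elsewhere
derivatives within `I` are unique. -/

section LinearAlgebra

variable {n : ℕ}

theorem symplecticJ_eq_neg_J : symplecticJ n = -J (Fin n) ℝ := by
  simp [symplecticJ, J, fromBlocks_neg]

theorem mem_symplecticGroup_iff_symplecticJ {M : Matrix (Fin n ⊕ Fin n) (Fin n ⊕ Fin n) ℝ} :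
    M ∈ symplecticGroup (Fin n) ℝ ↔ Mᵀ * symplecticJ n * M = symplecticJ n := by
  simp [SymplecticGroup.mem_iff', symplecticJ_eq_neg_J]

theorem mulVec_eq_symplecticJ_mulVec_iff {M : Matrix (Fin n ⊕ Fin n) (Fin n ⊕ Fin n) ℝ}
    (hM : M ∈ symplecticGroup (Fin n) ℝ) (v g : Fin n ⊕ Fin n → ℝ) :
    M *ᵥ v = symplecticJ n *ᵥ g ↔ v = symplecticJ n *ᵥ (Mᵀ *ᵥ g) := by
  have hMJM : M * symplecticJ n * Mᵀ = symplecticJ n := by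
    simpa [symplecticJ_eq_neg_J] using SymplecticGroup.mem_iff.1 hM
  have hinj : Function.Injective M.mulVec :=
    mulVec_injective_iff_isUnit.2 <|
      (isUnit_iff_isUnit_det M).2 (SymplecticGroup.symplectic_det hM)
  conv_rhs => rw [← hinj.eq_iff]
  rw [mulVec_mulVec, mulVec_mulVec, hMJM]

end LinearAlgebra

section Calculus

variable {E F : Type*} [NormedAddCommGroup E] [NormedSpace ℝ E]
  [NormedAddCommGroup F] [NormedSpace ℝ F]

theorem HasDerivWithinAt.hasDerivWithinAt_iff_of_eq_iff {f : ℝ → E} {g : ℝ → F}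
    {f' F' : E} {g' G' : F} {s : Set ℝ} {t : ℝ}
    (hf : HasDerivWithinAt f f' s t) (hg : HasDerivWithinAt g g' s t) (h : f' = F' ↔ g' = G') :
    HasDerivWithinAt f F' s t ↔ HasDerivWithinAt g G' s t := by
  by_cases hacc : AccPt t (Filter.principal s)
  · have hu := hacc.uniqueDiffWithinAt
    exact ⟨fun hF => h.1 (hu.eq_deriv s hf hF) ▸ hg, fun hG => h.2 (hu.eq_deriv s hg hG) ▸ hf⟩
  · exact ⟨fun _ => HasFDerivWithinAt.of_not_accPt hacc,
      fun _ => HasFDerivWithinAt.of_not_accPt hacc⟩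

theorem hasDerivWithinAt_comp_curve {f : ℝ → E → F} {x : ℝ → E} {ft' : F} {v : E}
    {s : Set ℝ} {t : ℝ}
    (hf : DifferentiableAt ℝ (fun p : ℝ × E => f p.1 p.2) (t, x t))
    (hft : HasDerivAt (fun τ => f τ (x t)) ft' t) (hx : HasDerivWithinAt x v s t) :
    HasDerivWithinAt (fun τ => f τ (x τ)) (ft' + fderiv ℝ (f t) (x t) v) s t := by
  set L := fderiv ℝ (fun p : ℝ × E => f p.1 p.2) (t, x t)
  have hL : HasFDerivAt (fun p : ℝ × E => f p.1 p.2) L (t, x t) := hf.hasFDerivAt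
  have htime : L (1, 0) = ft' := by
    have h : HasDerivAt (fun τ => f τ (x t)) (L (1, 0)) t :=
      HasFDerivAt.comp_hasDerivAt (l := fun p : ℝ × E => f p.1 p.2) t hL
        ((hasDerivAt_id' t).prodMk (hasDerivAt_const t (x t)))
    exact h.unique hft
  have hspace : fderiv ℝ (f t) (x t) = L.comp (.inr ℝ ℝ E) :=
    (hL.comp (x t) (hasFDerivAt_prodMk_right t (x t))).fderiv
  have hsplit : L (1, v) = L (1, 0) + L (0, v) := by
    rw [← map_add, Prod.mk_add_mk, add_zero, zero_add]
  have h := hL.comp_hasDerivWithinAt t ((hasDerivWithinAt_id t s).prodMk hx)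
  rw [hsplit, htime] at h
  rw [hspace]
  exact h

theorem ContinuousLinearMap.apply_eq_dotProduct {ι : Type*} [Fintype ι] [DecidableEq ι]
    (L : (ι → ℝ) →L[ℝ] ℝ) (w : ι → ℝ) : L w = (fun j => L (Pi.single j 1)) ⬝ᵥ w := by
  conv_lhs => rw [pi_eq_sum_univ' w]
  simp [dotProduct, mul_comm]

end Calculus

section Hamiltonian

variable {n : ℕ}

noncomputable def spatialGradient (H : ℝ × (Fin n ⊕ Fin n → ℝ) → ℝ) (t : ℝ)
    (z : Fin n ⊕ Fin n → ℝ) : Fin n ⊕ Fin n → ℝ :=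
  fun j => fderiv ℝ (fun w => H (t, w)) z (Pi.single j 1)

theorem isHamiltonSolutionOn_iff {H : ℝ × (Fin n ⊕ Fin n → ℝ) → ℝ}
    {z : ℝ → Fin n ⊕ Fin n → ℝ} {I : Set ℝ} :
    IsHamiltonSolutionOn n H z I ↔
      ∀ t ∈ I, HasDerivWithinAt z (symplecticJ n *ᵥ spatialGradient H t (z t)) I t := by
  simp only [hasDerivWithinAt_pi]
  rfl

theorem spatialGradient_add {Q R : ℝ × (Fin n ⊕ Fin n → ℝ) → ℝ}
    (hQ : Differentiable ℝ Q) (hR : Differentiable ℝ R) (t : ℝ) (z : Fin n ⊕ Fin n → ℝ) :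
    spatialGradient (fun p => Q p + R p) t z = spatialGradient Q t z + spatialGradient R t z := by
  ext j
  have hQt : Differentiable ℝ (fun w => Q (t, w)) := hQ.comp (by fun_prop)
  have hRt : Differentiable ℝ (fun w => R (t, w)) := hR.comp (by fun_prop)
  simp [spatialGradient, fderiv_fun_add (hQt z) (hRt z)]

theorem spatialJacobian_eq_toMatrix' {Φ : ℝ → (Fin n ⊕ Fin n → ℝ) → Fin n ⊕ Fin n → ℝ}
    {t : ℝ} {a : Fin n ⊕ Fin n → ℝ} (hΦ : DifferentiableAt ℝ (Φ t) a) :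
    spatialJacobian n Φ t a = LinearMap.toMatrix' (fderiv ℝ (Φ t) a : _ →ₗ[ℝ] _) := by
  ext i j
  simp [spatialJacobian, fderiv_apply hΦ]

theorem spatialJacobian_mulVec {Φ : ℝ → (Fin n ⊕ Fin n → ℝ) → Fin n ⊕ Fin n → ℝ} {t : ℝ}
    {a : Fin n ⊕ Fin n → ℝ} (hΦ : DifferentiableAt ℝ (Φ t) a) (v : Fin n ⊕ Fin n → ℝ) :
    spatialJacobian n Φ t a *ᵥ v = fderiv ℝ (Φ t) a v := by
  rw [spatialJacobian_eq_toMatrix' hΦ, LinearMap.toMatrix'_mulVec]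
  rfl

theorem spatialGradient_comp {R : ℝ × (Fin n ⊕ Fin n → ℝ) → ℝ}
    {Φ : ℝ → (Fin n ⊕ Fin n → ℝ) → Fin n ⊕ Fin n → ℝ} {t : ℝ} {a : Fin n ⊕ Fin n → ℝ}
    (hR : DifferentiableAt ℝ (fun w => R (t, w)) (Φ t a)) (hΦ : DifferentiableAt ℝ (Φ t) a) :
    spatialGradient (fun p => R (p.1, Φ p.1 p.2)) t a =
      (spatialJacobian n Φ t a)ᵀ *ᵥ spatialGradient R t (Φ t a) := by
  ext j
  have hchain : fderiv ℝ (fun w => R (t, Φ t w)) a =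
      (fderiv ℝ (fun w => R (t, w)) (Φ t a)).comp (fderiv ℝ (Φ t) a) :=
    fderiv_comp (g := fun w => R (t, w)) a hR hΦ
  rw [spatialGradient, hchain, ContinuousLinearMap.comp_apply, ← spatialJacobian_mulVec hΦ,
    ContinuousLinearMap.apply_eq_dotProduct, dotProduct_mulVec, dotProduct_single_one,
    mulVec_transpose]
  rfl

end Hamiltonian

theorem lagrange_variation_of_constants_general (n : ℕ)
    (Q R : ℝ × ((Fin n ⊕ Fin n) → ℝ) → ℝ)
    (hQ : ContDiff ℝ 2 Q) (hR : ContDiff ℝ 2 R)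
    (Φ : ℝ → ((Fin n ⊕ Fin n) → ℝ) → (Fin n ⊕ Fin n) → ℝ)
    (hΦ : ContDiff ℝ 1 (fun p : ℝ × ((Fin n ⊕ Fin n) → ℝ) => Φ p.1 p.2))
    (hflow : ∀ (t : ℝ) (a : (Fin n ⊕ Fin n) → ℝ) (i : Fin n ⊕ Fin n),
      HasDerivAt (fun s => Φ s a i)
        (∑ j : Fin n ⊕ Fin n, symplecticJ n i j *
          fderiv ℝ (fun w => Q (t, w)) (Φ t a) (Pi.single j 1)) t)
    (hjac : ∀ (t : ℝ) (a : (Fin n ⊕ Fin n) → ℝ),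
      IsUnit (spatialJacobian n Φ t a).det ∧
      (spatialJacobian n Φ t a)ᵀ * symplecticJ n * spatialJacobian n Φ t a
        = symplecticJ n)
    (I : Set ℝ)
    (a : ℝ → (Fin n ⊕ Fin n) → ℝ) (ha : ContDiffOn ℝ 1 a I) :
    IsHamiltonSolutionOn n (fun p => Q p + R p) (fun t => Φ t (a t)) I ↔
      IsHamiltonSolutionOn n (fun p : ℝ × ((Fin n ⊕ Fin n) → ℝ) => R (p.1, Φ p.1 p.2))
        a I := by
  have hQd := hQ.differentiable two_ne_zero
  have hRd := hR.differentiable two_ne_zero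
  have hΦd := hΦ.differentiable one_ne_zero
  have hΦt (t : ℝ) : Differentiable ℝ (Φ t) :=
    hΦd.comp (f := fun w => (t, w)) (by fun_prop)
  have hRt (t : ℝ) : Differentiable ℝ (fun w => R (t, w)) := hRd.comp (by fun_prop)
  rw [isHamiltonSolutionOn_iff, isHamiltonSolutionOn_iff]
  refine forall₂_congr fun t ht => ?_
  have hv : HasDerivWithinAt a (derivWithin a I t) I t :=
    (ha.differentiableOn one_ne_zero t ht).hasDerivWithinAt
  have hflow_t : HasDerivAt (fun s => Φ s (a t))
      (symplecticJ n *ᵥ spatialGradient Q t (Φ t (a t))) t :=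
    hasDerivAt_pi.2 (hflow t (a t))
  have hz := hasDerivWithinAt_comp_curve (hΦd _) hflow_t hv
  rw [← spatialJacobian_mulVec (hΦt t _)] at hz
  refine hz.hasDerivWithinAt_iff_of_eq_iff hv ?_
  rw [spatialGradient_add hQd hRd, spatialGradient_comp (hRt t _) (hΦt t _), mulVec_add,
    add_right_inj, mulVec_eq_symplecticJ_mulVec_iff
      (mem_symplecticGroup_iff_symplecticJ.2 (hjac t (a t)).2)]

/-- **Lagrange's method of varying constants (exact form).** Let
`Q, R : ℝ × ℝ²ⁿ → ℝ` be `C²` and let `Φ : ℝ × ℝ²ⁿ → ℝ²ⁿ` be a `C¹` map such that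
`∂Φ/∂t(t, a) = J ∇_z Q(t, Φ(t, a))` for all `(t, a)` and such that for every
`(t, a)` the spatial Jacobian `D_aΦ(t, a)` is an invertible symplectic matrix.
Let `a : I → ℝ²ⁿ` be a `C¹` curve on an interval `I`.  Then `t ↦ Φ(t, a(t))` is a
solution of Hamilton's equations for the Hamiltonian `Q + R` if and only if `a`
is a solution of Hamilton's equations for the pulled-back time-dependent
Hamiltonian `K(t, b) = R(t, Φ(t, b))`. -/
theorem lagrange_variation_of_constants (n : ℕ)
    (Q R : ℝ × ((Fin n ⊕ Fin n) → ℝ) → ℝ)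
    (hQ : ContDiff ℝ 2 Q) (hR : ContDiff ℝ 2 R)
    (Φ : ℝ → ((Fin n ⊕ Fin n) → ℝ) → (Fin n ⊕ Fin n) → ℝ)
    (hΦ : ContDiff ℝ 1 (fun p : ℝ × ((Fin n ⊕ Fin n) → ℝ) => Φ p.1 p.2))
    (hflow : ∀ (t : ℝ) (a : (Fin n ⊕ Fin n) → ℝ) (i : Fin n ⊕ Fin n),
      HasDerivAt (fun s => Φ s a i)
        (∑ j : Fin n ⊕ Fin n, symplecticJ n i j *
          fderiv ℝ (fun w => Q (t, w)) (Φ t a) (Pi.single j 1)) t)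
    (hjac : ∀ (t : ℝ) (a : (Fin n ⊕ Fin n) → ℝ),
      IsUnit (spatialJacobian n Φ t a).det ∧
      (spatialJacobian n Φ t a)ᵀ * symplecticJ n * spatialJacobian n Φ t a
        = symplecticJ n)
    (I : Set ℝ) (hI : I.OrdConnected)
    (a : ℝ → (Fin n ⊕ Fin n) → ℝ) (ha : ContDiffOn ℝ 1 a I) :
    IsHamiltonSolutionOn n (fun p => Q p + R p) (fun t => Φ t (a t)) I ↔
      IsHamiltonSolutionOn n (fun p : ℝ × ((Fin n ⊕ Fin n) → ℝ) => R (p.1, Φ p.1 p.2))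
        a I :=
  lagrange_variation_of_constants_general n Q R hQ hR Φ hΦ hflow hjac I a ha
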